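/- For all x in [0,1], arcsin(x) ≤ (π(2-√2)/(π-2√2))·(sqrt(1+x) - sqrt(1-x)) / (√2(4-π)/(π-2√2) + sqrt(1+x) + sqrt(1-x)). -/

import Mathlib

/-!
Put `x = sin (2 t)` with `t ∈ [0, π / 4]`. Then `√(1 ± x) = cos t ± sin t`, and after clearing
denominators the bound reads `0 ≤ D t`, where
`D t = π (2 - √2) sin t - √2 (4 - π) t - 2 (π - 2 √2) t cos t` (`malesevicDefect`) vanishes at `0`
and at `π / 4`. On `[0, 0.78]` the alternating Taylor bounds of degree 7 for `sin` and 8 for `cos`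
give `D t ≥ t³ P (t²)` for an explicit cubic `P` that is positive there. Near `π / 4` these bounds
are too weak, but there `D` is decreasing, so `D t ≥ D (π / 4) = 0`.
-/

open Real Nat

noncomputable def sinTaylor (n : ℕ) (t : ℝ) : ℝ :=
  ∑ k ∈ Finset.range n, (-1) ^ k * t ^ (2 * k + 1) / (2 * k + 1)!

noncomputable def cosTaylor (n : ℕ) (t : ℝ) : ℝ :=
  ∑ k ∈ Finset.range n, (-1) ^ k * t ^ (2 * k) / (2 * k)!

lemma hasDerivAt_pow_succ_div_factorial (c : ℝ) (m : ℕ) (t : ℝ) :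
    HasDerivAt (fun u : ℝ ↦ c * u ^ (m + 1) / (m + 1)!) (c * t ^ m / m !) t := by
  refine (((hasDerivAt_pow (m + 1) t).const_mul c).div_const ((m + 1)! : ℝ)).congr_deriv ?_
  rw [Nat.factorial_succ, Nat.cast_mul]
  field_simp
  push_cast
  ring

lemma hasDerivAt_sinTaylor (n : ℕ) (t : ℝ) : HasDerivAt (sinTaylor n) (cosTaylor n t) t := by
  unfold sinTaylor cosTaylor
  exact HasDerivAt.fun_sum fun k _ ↦ hasDerivAt_pow_succ_div_factorial _ (2 * k) t

lemma hasDerivAt_cosTaylor_succ (n : ℕ) (t : ℝ) :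
    HasDerivAt (cosTaylor (n + 1)) (-sinTaylor n t) t := by
  have hcos : cosTaylor (n + 1) =
      fun u ↦ ∑ k ∈ Finset.range n, -(-1 : ℝ) ^ k * u ^ (2 * k + 1 + 1) / (2 * k + 1 + 1)! + 1 :=
    by
    ext u
    simp [cosTaylor, Finset.sum_range_succ', pow_succ, mul_add]
  rw [hcos, sinTaylor, ← Finset.sum_neg_distrib]
  refine (HasDerivAt.fun_sum fun k _ ↦ ?_).add_const 1
  simpa only [neg_mul, neg_div] using hasDerivAt_pow_succ_div_factorial (-(-1) ^ k) (2 * k + 1) t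

lemma nonneg_of_hasDerivAt_nonneg {f f' : ℝ → ℝ} (hf : ∀ u, HasDerivAt f (f' u) u)
    (h0 : f 0 = 0) (hf' : ∀ u, 0 ≤ u → 0 ≤ f' u) {t : ℝ} (ht : 0 ≤ t) : 0 ≤ f t := by
  have hmono : MonotoneOn f (Set.Ici 0) :=
    monotoneOn_of_hasDerivWithinAt_nonneg (convex_Ici 0)
      (fun u _ ↦ (hf u).continuousAt.continuousWithinAt) (fun u _ ↦ (hf u).hasDerivWithinAt)
      (fun u hu ↦ hf' u (interior_subset hu))
  simpa [h0] using hmono Set.self_mem_Ici ht ht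

lemma sin_sub_sinTaylor_sign_of_cos {n : ℕ}
    (hcos : ∀ t, 0 ≤ t → 0 ≤ (-1) ^ (n + 1) * (cos t - cosTaylor (n + 1) t))
    {t : ℝ} (ht : 0 ≤ t) :
    0 ≤ (-1) ^ (n + 1) * (sin t - sinTaylor (n + 1) t) :=
  nonneg_of_hasDerivAt_nonneg
    (fun u ↦ ((hasDerivAt_sin u).sub (hasDerivAt_sinTaylor _ u)).const_mul _)
    (by simp [sinTaylor]) hcos ht

lemma cos_sub_cosTaylor_sign (n : ℕ) {t : ℝ} (ht : 0 ≤ t) :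
    0 ≤ (-1) ^ (n + 1) * (cos t - cosTaylor (n + 1) t) := by
  induction n generalizing t with
  | zero => simpa [cosTaylor] using cos_le_one t
  | succ n ih =>
    refine nonneg_of_hasDerivAt_nonneg
      (fun u ↦ ((hasDerivAt_cos u).sub (hasDerivAt_cosTaylor_succ _ u)).const_mul _)
      (by simp [cosTaylor, Finset.sum_range_succ']) (fun u hu ↦ ?_) ht
    have hsin := sin_sub_sinTaylor_sign_of_cos (fun _ ↦ ih) hu
    rw [pow_succ]
    linarith

lemma sin_sub_sinTaylor_sign (n : ℕ) {t : ℝ} (ht : 0 ≤ t) :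
    0 ≤ (-1) ^ (n + 1) * (sin t - sinTaylor (n + 1) t) :=
  sin_sub_sinTaylor_sign_of_cos (fun _ ↦ cos_sub_cosTaylor_sign n) ht

lemma sin_ge_taylor_seven {t : ℝ} (ht : 0 ≤ t) :
    t - t ^ 3 / 6 + t ^ 5 / 120 - t ^ 7 / 5040 ≤ sin t := by
  have h : sinTaylor 4 t = t - t ^ 3 / 6 + t ^ 5 / 120 - t ^ 7 / 5040 := by
    norm_num [sinTaylor, Finset.sum_range_succ, Nat.factorial]
    ring
  linarith [h ▸ sin_sub_sinTaylor_sign 3 ht]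

lemma cos_le_taylor_eight {t : ℝ} (ht : 0 ≤ t) :
    cos t ≤ 1 - t ^ 2 / 2 + t ^ 4 / 24 - t ^ 6 / 720 + t ^ 8 / 40320 := by
  have h : cosTaylor 5 t = 1 - t ^ 2 / 2 + t ^ 4 / 24 - t ^ 6 / 720 + t ^ 8 / 40320 := by
    norm_num [cosTaylor, Finset.sum_range_succ, Nat.factorial]
    ring
  linarith [h ▸ cos_sub_cosTaylor_sign 4 ht]

lemma sqrt_two_gt_d6 : 1.414213 < √2 := by
  rw [Real.lt_sqrt (by norm_num)]; norm_num

lemma sqrt_two_lt_d6 : √2 < 1.414214 := by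
  rw [Real.sqrt_lt' (by norm_num)]; norm_num

lemma cos_sub_sin_nonneg {t : ℝ} (ht0 : 0 ≤ t) (ht : t ≤ π / 4) : 0 ≤ cos t - sin t := by
  have h : sin t ≤ sin (π / 2 - t) :=
    sin_le_sin_of_le_of_le_pi_div_two (by linarith [pi_pos]) (by linarith) (by linarith)
  rw [sin_pi_div_two_sub] at h
  linarith

lemma sqrt_one_add_sin_two_mul (t : ℝ) : √(1 + sin (2 * t)) = |cos t + sin t| := by
  rw [← sqrt_sq_eq_abs, sin_two_mul, add_sq, ← sin_sq_add_cos_sq t]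
  ring_nf

lemma sqrt_one_sub_sin_two_mul (t : ℝ) : √(1 - sin (2 * t)) = |cos t - sin t| := by
  rw [← sqrt_sq_eq_abs, sin_two_mul, sub_sq, ← sin_sq_add_cos_sq t]
  ring_nf

lemma malesevic_cubic_nonneg {d E u : ℝ} (hd : 0.313164 ≤ d) (hE : E ≤ 1.8403044)
    (hu0 : 0 ≤ u) (hu : u ≤ 0.6084) :
    0 ≤ d * (1 - u / 12 + u ^ 2 / 360 - u ^ 3 / 20160)
      - E * (1 / 6 - u / 120 + u ^ 2 / 5040) := by
  have hcd : 0 ≤ 1 - u / 12 + u ^ 2 / 360 - u ^ 3 / 20160 := by nlinarith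
  have hcE : 0 ≤ 1 / 6 - u / 120 + u ^ 2 / 5040 := by nlinarith
  have hnum : 0 ≤ 0.313164 * (1 - u / 12 + u ^ 2 / 360 - u ^ 3 / 20160)
      - 1.8403044 * (1 / 6 - u / 120 + u ^ 2 / 5040) := by
    nlinarith [mul_nonneg (sub_nonneg.2 hu) hu0, mul_nonneg (mul_nonneg (sub_nonneg.2 hu) hu0) hu0]
  nlinarith [mul_le_mul_of_nonneg_right hd hcd, mul_le_mul_of_nonneg_right hE hcE]

noncomputable def malesevicDefect (t : ℝ) : ℝ :=
  π * (2 - √2) * sin t - √2 * (4 - π) * t - 2 * (π - 2 * √2) * (t * cos t)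

lemma malesevicDefect_pi_div_four : malesevicDefect (π / 4) = 0 := by
  simp only [malesevicDefect, sin_pi_div_four, cos_pi_div_four]
  ring

lemma hasDerivAt_malesevicDefect (t : ℝ) :
    HasDerivAt malesevicDefect
      (√2 * (4 - π) * (cos t - 1) + 2 * (π - 2 * √2) * (t * sin t)) t := by
  have h := (((hasDerivAt_sin t).const_mul (π * (2 - √2))).sub
    ((hasDerivAt_id t).const_mul (√2 * (4 - π)))).sub
    (((hasDerivAt_id t).mul (hasDerivAt_cos t)).const_mul (2 * (π - 2 * √2)))
  exact h.congr_deriv (by simp only [id_eq]; ring)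

lemma malesevicDefect_nonneg_of_le {t : ℝ} (ht0 : 0 ≤ t) (ht : t ≤ 0.78) :
    0 ≤ malesevicDefect t := by
  have hd : 0.313164 ≤ π - 2 * √2 := by linarith [pi_gt_d6, sqrt_two_lt_d6]
  have hE : π * (2 - √2) ≤ 1.8403044 := by
    nlinarith [pi_gt_d6, pi_lt_d6, sqrt_two_gt_d6, sqrt_two_lt_d6]
  have hsin := mul_le_mul_of_nonneg_left (sin_ge_taylor_seven ht0)
    (by nlinarith [sqrt_two_lt_d6, pi_pos] : 0 ≤ π * (2 - √2))
  have hcos := mul_le_mul_of_nonneg_left (cos_le_taylor_eight ht0)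
    (by nlinarith : 0 ≤ 2 * (π - 2 * √2) * t)
  calc 0 ≤ t ^ 3 * ((π - 2 * √2) * (1 - t ^ 2 / 12 + (t ^ 2) ^ 2 / 360 - (t ^ 2) ^ 3 / 20160)
        - π * (2 - √2) * (1 / 6 - t ^ 2 / 120 + (t ^ 2) ^ 2 / 5040)) :=
        mul_nonneg (pow_nonneg ht0 3) (malesevic_cubic_nonneg hd hE (sq_nonneg t) (by nlinarith))
    _ = π * (2 - √2) * (t - t ^ 3 / 6 + t ^ 5 / 120 - t ^ 7 / 5040) - √2 * (4 - π) * t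
        - 2 * (π - 2 * √2) * t * (1 - t ^ 2 / 2 + t ^ 4 / 24 - t ^ 6 / 720 + t ^ 8 / 40320) := by
      ring
    _ ≤ malesevicDefect t := by
      unfold malesevicDefect
      linarith

lemma antitoneOn_malesevicDefect : AntitoneOn malesevicDefect (Set.Icc 0.78 (π / 4)) := by
  refine antitoneOn_of_hasDerivWithinAt_nonpos (convex_Icc _ _)
    (fun u _ ↦ (hasDerivAt_malesevicDefect u).continuousAt.continuousWithinAt)
    (fun u _ ↦ (hasDerivAt_malesevicDefect u).hasDerivWithinAt) fun u hu ↦ ?_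
  rw [interior_Icc] at hu
  obtain ⟨hlo, hhi⟩ := hu
  have hsin : sin u ≤ √2 / 2 := by
    rw [← sin_pi_div_four]
    exact sin_le_sin_of_le_of_le_pi_div_two (by linarith [pi_pos]) (by linarith [pi_pos]) hhi.le
  have hcos : cos u ≤ cos 0.78 :=
    cos_le_cos_of_nonneg_of_le_pi (by norm_num) (by linarith [pi_pos]) hlo.le
  have hcos78 : cos 0.78 ≤ 0.711223 := by
    have := cos_le_taylor_eight (t := 0.78) (by norm_num)
    norm_num at this ⊢
    linarith
  have husin : u * sin u ≤ π / 4 * (√2 / 2) :=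
    mul_le_mul hhi.le hsin (sin_nonneg_of_nonneg_of_le_pi (by linarith) (by linarith [pi_pos]))
      (by positivity)
  have hF : 0 ≤ √2 * (4 - π) := by nlinarith [pi_lt_d6, sqrt_two_gt_d6]
  have hd : 0 ≤ 2 * (π - 2 * √2) := by nlinarith [pi_gt_d6, sqrt_two_lt_d6]
  have hnum : √2 * (4 - π) * (0.711223 - 1) + 2 * (π - 2 * √2) * (π / 4 * (√2 / 2)) ≤ 0 := by
    have h : √2 * √2 = 2 := mul_self_sqrt zero_le_two
    nlinarith [pi_gt_d6, pi_lt_d6, sqrt_two_gt_d6, sqrt_two_lt_d6]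
  linarith [mul_le_mul_of_nonneg_left husin hd, mul_le_mul_of_nonneg_left (hcos.trans hcos78) hF]

lemma malesevicDefect_nonneg {t : ℝ} (ht0 : 0 ≤ t) (ht : t ≤ π / 4) : 0 ≤ malesevicDefect t := by
  rcases le_or_gt t 0.78 with hsmall | hlarge
  · exact malesevicDefect_nonneg_of_le ht0 hsmall
  · rw [← malesevicDefect_pi_div_four]
    exact antitoneOn_malesevicDefect ⟨hlarge.le, ht⟩ ⟨hlarge.le.trans ht, le_rfl⟩ ht

theorem stmt_8 : ∀ x ∈ Set.Icc (0:ℝ) 1,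
    Real.arcsin x ≤
      (Real.pi * (2 - Real.sqrt 2) / (Real.pi - 2 * Real.sqrt 2)) *
        (Real.sqrt (1 + x) - Real.sqrt (1 - x)) /
      (Real.sqrt 2 * (4 - Real.pi) / (Real.pi - 2 * Real.sqrt 2) +
        Real.sqrt (1 + x) + Real.sqrt (1 - x)) := by
  rintro x ⟨hx0, hx1⟩
  obtain ⟨t, ht0, ht, rfl⟩ : ∃ t, 0 ≤ t ∧ t ≤ π / 4 ∧ x = sin (2 * t) :=
    ⟨arcsin x / 2, by linarith [arcsin_nonneg.2 hx0], by linarith [arcsin_le_pi_div_two x],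
      by rw [mul_div_cancel₀ _ two_ne_zero, sin_arcsin (by linarith) hx1]⟩
  have hcs := cos_sub_sin_nonneg ht0 ht
  have hsin := sin_nonneg_of_nonneg_of_le_pi ht0 (by linarith [pi_pos])
  have hF : 0 < √2 * (4 - π) := by nlinarith [pi_lt_d6, sqrt_two_gt_d6]
  have hd : 0 < π - 2 * √2 := by linarith [pi_gt_d6, sqrt_two_lt_d6]
  rw [arcsin_sin (by linarith) (by linarith [pi_pos]), sqrt_one_add_sin_two_mul,
    sqrt_one_sub_sin_two_mul, abs_of_nonneg hcs, abs_of_nonneg (by linarith),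
    le_div_iff₀ (by linarith [div_pos hF hd])]
  calc 2 * t * (√2 * (4 - π) / (π - 2 * √2) + (cos t + sin t) + (cos t - sin t))
      = π * (2 - √2) / (π - 2 * √2) * ((cos t + sin t) - (cos t - sin t))
          - 2 / (π - 2 * √2) * malesevicDefect t := by
        unfold malesevicDefect
        field_simp
        ring
    _ ≤ _ := sub_le_self _
      (mul_nonneg (div_nonneg zero_le_two hd.le) (malesevicDefect_nonneg ht0 ht))
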